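/- If the MPC optimization problem with terminal set Z_f (positively invariant under v = Kz, with K Z_f ⊆ V and terminal cost decrease ‖(A+BK)z‖²_{Q_f} - ‖z‖²_{Q_f} ≤ -‖z‖²_Q - ‖Kz‖²_R on Z_f) is feasible at state z with optimal solution (z_0*, ..., z_N*, v_0*, ..., v_{N-1}*), then the shifted sequence V̄ = (v_1*, ..., v_{N-1}*, K z_N*) is feasible for the problem at the successor nominal state z_1* = A z + B v_0*, and the corresponding cost satisfies J(z_1*, V̄) ≤ J*(z) - ‖z‖²_Q - ‖v_0*‖²_R. Hence J*(z_1*) ≤ J*(z) - ‖z‖²_Q - ‖v_0*‖²_R. -/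

import Mathlib

open Matrix Finset

variable {nx nu : ℕ}

/-- Nominal state trajectory `z_{i+1} = A z_i + B v_i`, `z_0 = s`. -/
noncomputable def mpcTraj (A : Matrix (Fin nx) (Fin nx) ℝ) (B : Matrix (Fin nx) (Fin nu) ℝ)
    (v : ℕ → Fin nu → ℝ) (s : Fin nx → ℝ) : ℕ → Fin nx → ℝ
  | 0 => s
  | k + 1 => A.mulVec (mpcTraj A B v s k) + B.mulVec (v k)

/-- MPC cost `‖z_N‖²_{Q_f} + Σ_{i<N} (‖z_i‖²_Q + ‖v_i‖²_R)`. -/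
noncomputable def mpcCost (A : Matrix (Fin nx) (Fin nx) ℝ) (B : Matrix (Fin nx) (Fin nu) ℝ)
    (Qf Q : Matrix (Fin nx) (Fin nx) ℝ) (R : Matrix (Fin nu) (Fin nu) ℝ) (N : ℕ)
    (v : ℕ → Fin nu → ℝ) (s : Fin nx → ℝ) : ℝ :=
  mpcTraj A B v s N ⬝ᵥ Qf.mulVec (mpcTraj A B v s N) +
    ∑ i ∈ range N, (mpcTraj A B v s i ⬝ᵥ Q.mulVec (mpcTraj A B v s i) +
      v i ⬝ᵥ R.mulVec (v i))

/-- Feasibility of an input sequence for the MPC problem with state constraint `Zset`,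
input constraint `Vset` and terminal set `Zf`. -/
def mpcFeasible (A : Matrix (Fin nx) (Fin nx) ℝ) (B : Matrix (Fin nx) (Fin nu) ℝ)
    (Zset : Set (Fin nx → ℝ)) (Vset : Set (Fin nu → ℝ)) (Zf : Set (Fin nx → ℝ)) (N : ℕ)
    (v : ℕ → Fin nu → ℝ) (s : Fin nx → ℝ) : Prop :=
  (∀ i < N, mpcTraj A B v s i ∈ Zset ∧ v i ∈ Vset) ∧ mpcTraj A B v s N ∈ Zf

/-
The shifted sequence drives the nominal system along the tail z*_1, …, z*_N of the optimal
trajectory and then applies the terminal law once, ending at (A + BK) z*_N ∈ Z_f. Its cost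
is that of v* with the first stage cost removed and the terminal cost ‖z*_N‖²_{Q_f} traded
for ‖z*_N‖²_Q + ‖K z*_N‖²_R + ‖(A + BK) z*_N‖²_{Q_f}, which the terminal decrease condition
bounds by ‖z*_N‖²_{Q_f}. Costs are nonnegative, so the set whose infimum is J* is bounded
below and `sInf` is a genuine infimum rather than the junk value 0.
-/

section Shift

variable (A : Matrix (Fin nx) (Fin nx) ℝ) (B : Matrix (Fin nx) (Fin nu) ℝ)
  {v w : ℕ → Fin nu → ℝ} {s : Fin nx → ℝ} {N : ℕ}

theorem mpcTraj_shift (hw : ∀ j < N, w j = v (j + 1)) {i : ℕ} (hi : i ≤ N) :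
    mpcTraj A B w (A *ᵥ s + B *ᵥ v 0) i = mpcTraj A B v s (i + 1) := by
  induction i with
  | zero => rfl
  | succ i ih =>
    simp only [mpcTraj, ih (by omega), hw i (by omega)]

theorem mpcTraj_shift_succ (K : Matrix (Fin nu) (Fin nx) ℝ)
    (hw : ∀ j < N, w j = v (j + 1)) (hwN : w N = K *ᵥ mpcTraj A B v s (N + 1)) :
    mpcTraj A B w (A *ᵥ s + B *ᵥ v 0) (N + 1) = (A + B * K) *ᵥ mpcTraj A B v s (N + 1) := by
  rw [mpcTraj, mpcTraj_shift A B hw le_rfl, hwN, add_mulVec, mulVec_mulVec]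

theorem mpcFeasible_shift (K : Matrix (Fin nu) (Fin nx) ℝ)
    {Zset Zf : Set (Fin nx → ℝ)} {Vset : Set (Fin nu → ℝ)} (hZfZ : Zf ⊆ Zset)
    (hinv : ∀ z ∈ Zf, (A + B * K) *ᵥ z ∈ Zf) (hKV : ∀ z ∈ Zf, K *ᵥ z ∈ Vset)
    (hfeas : mpcFeasible A B Zset Vset Zf (N + 1) v s)
    (hw : ∀ j < N, w j = v (j + 1)) (hwN : w N = K *ᵥ mpcTraj A B v s (N + 1)) :
    mpcFeasible A B Zset Vset Zf (N + 1) w (A *ᵥ s + B *ᵥ v 0) := by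
  obtain ⟨hstage, hterminal⟩ := hfeas
  refine ⟨fun i hi => ?_, ?_⟩
  · rw [mpcTraj_shift A B hw (by omega)]
    rcases Nat.lt_succ_iff_lt_or_eq.mp hi with hi | rfl
    · exact ⟨(hstage (i + 1) (by omega)).1, hw i hi ▸ (hstage (i + 1) (by omega)).2⟩
    · exact ⟨hZfZ hterminal, hwN ▸ hKV _ hterminal⟩
  · rw [mpcTraj_shift_succ A B K hw hwN]
    exact hinv _ hterminal

variable (Qf Q : Matrix (Fin nx) (Fin nx) ℝ) (R : Matrix (Fin nu) (Fin nu) ℝ)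

theorem mpcCost_shift (hw : ∀ j < N, w j = v (j + 1)) :
    mpcCost A B Qf Q R (N + 1) w (A *ᵥ s + B *ᵥ v 0) =
      mpcCost A B Qf Q R (N + 1) v s - (s ⬝ᵥ Q *ᵥ s + v 0 ⬝ᵥ R *ᵥ v 0)
        - mpcTraj A B v s (N + 1) ⬝ᵥ Qf *ᵥ mpcTraj A B v s (N + 1)
        + (mpcTraj A B v s (N + 1) ⬝ᵥ Q *ᵥ mpcTraj A B v s (N + 1) + w N ⬝ᵥ R *ᵥ w N)
        + mpcTraj A B w (A *ᵥ s + B *ᵥ v 0) (N + 1) ⬝ᵥ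
            Qf *ᵥ mpcTraj A B w (A *ᵥ s + B *ᵥ v 0) (N + 1) := by
  have htail : ∀ i ∈ range N,
      mpcTraj A B w (A *ᵥ s + B *ᵥ v 0) i ⬝ᵥ Q *ᵥ mpcTraj A B w (A *ᵥ s + B *ᵥ v 0) i
          + w i ⬝ᵥ R *ᵥ w i =
        mpcTraj A B v s (i + 1) ⬝ᵥ Q *ᵥ mpcTraj A B v s (i + 1)
          + v (i + 1) ⬝ᵥ R *ᵥ v (i + 1) := fun i hi => by
    rw [mpcTraj_shift A B hw (mem_range.mp hi).le, hw i (mem_range.mp hi)]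
  rw [mpcCost, mpcCost, sum_range_succ, sum_congr rfl htail, mpcTraj_shift A B hw le_rfl,
    sum_range_succ' _ N, mpcTraj]
  ring

theorem mpcCost_shift_le (K : Matrix (Fin nu) (Fin nx) ℝ)
    (hw : ∀ j < N, w j = v (j + 1)) (hwN : w N = K *ᵥ mpcTraj A B v s (N + 1))
    (hdecrease :
      (A + B * K) *ᵥ mpcTraj A B v s (N + 1) ⬝ᵥ Qf *ᵥ ((A + B * K) *ᵥ mpcTraj A B v s (N + 1))
          - mpcTraj A B v s (N + 1) ⬝ᵥ Qf *ᵥ mpcTraj A B v s (N + 1) ≤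
        -(mpcTraj A B v s (N + 1) ⬝ᵥ Q *ᵥ mpcTraj A B v s (N + 1))
          - K *ᵥ mpcTraj A B v s (N + 1) ⬝ᵥ R *ᵥ (K *ᵥ mpcTraj A B v s (N + 1))) :
    mpcCost A B Qf Q R (N + 1) w (A *ᵥ s + B *ᵥ v 0) ≤
      mpcCost A B Qf Q R (N + 1) v s - s ⬝ᵥ Q *ᵥ s - v 0 ⬝ᵥ R *ᵥ v 0 := by
  rw [mpcCost_shift A B Qf Q R hw, mpcTraj_shift_succ A B K hw hwN, hwN]
  linarith

end Shift

theorem mpcCost_nonneg {A : Matrix (Fin nx) (Fin nx) ℝ} {B : Matrix (Fin nx) (Fin nu) ℝ}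
    {Qf Q : Matrix (Fin nx) (Fin nx) ℝ} {R : Matrix (Fin nu) (Fin nu) ℝ}
    (hQf : Qf.PosSemidef) (hQ : Q.PosSemidef) (hR : R.PosSemidef) (N : ℕ)
    (v : ℕ → Fin nu → ℝ) (s : Fin nx → ℝ) : 0 ≤ mpcCost A B Qf Q R N v s :=
  add_nonneg (hQf.dotProduct_mulVec_nonneg _) <| sum_nonneg fun _ _ =>
    add_nonneg (hQ.dotProduct_mulVec_nonneg _) (hR.dotProduct_mulVec_nonneg _)

theorem sInf_mpcCost_le {A : Matrix (Fin nx) (Fin nx) ℝ} {B : Matrix (Fin nx) (Fin nu) ℝ}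
    {Qf Q : Matrix (Fin nx) (Fin nx) ℝ} {R : Matrix (Fin nu) (Fin nu) ℝ}
    (hQf : Qf.PosSemidef) (hQ : Q.PosSemidef) (hR : R.PosSemidef)
    {Zset Zf : Set (Fin nx → ℝ)} {Vset : Set (Fin nu → ℝ)} {N : ℕ}
    {v : ℕ → Fin nu → ℝ} {s : Fin nx → ℝ} (hfeas : mpcFeasible A B Zset Vset Zf N v s) :
    sInf {c : ℝ | ∃ v, mpcFeasible A B Zset Vset Zf N v s ∧ c = mpcCost A B Qf Q R N v s} ≤
      mpcCost A B Qf Q R N v s := by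
  refine csInf_le ⟨0, ?_⟩ ⟨v, hfeas, rfl⟩
  rintro _ ⟨u, -, rfl⟩
  exact mpcCost_nonneg hQf hQ hR N u s

theorem mpc_shifted_feasible_cost_decrease_general
    (A : Matrix (Fin nx) (Fin nx) ℝ) (B : Matrix (Fin nx) (Fin nu) ℝ)
    (K : Matrix (Fin nu) (Fin nx) ℝ)
    (Qf Q : Matrix (Fin nx) (Fin nx) ℝ) (R : Matrix (Fin nu) (Fin nu) ℝ)
    (hQf : Qf.PosDef) (hQ : Q.PosDef) (hR : R.PosDef)
    (Zset Zf : Set (Fin nx → ℝ)) (Vset : Set (Fin nu → ℝ))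
    (hZfZ : Zf ⊆ Zset)
    (hinv : ∀ z ∈ Zf, (A + B * K).mulVec z ∈ Zf)
    (hKV : ∀ z ∈ Zf, K.mulVec z ∈ Vset)
    (hterm : ∀ z ∈ Zf,
      (A + B * K).mulVec z ⬝ᵥ Qf.mulVec ((A + B * K).mulVec z) - z ⬝ᵥ Qf.mulVec z ≤
        -(z ⬝ᵥ Q.mulVec z) - K.mulVec z ⬝ᵥ R.mulVec (K.mulVec z))
    (N : ℕ) (hN : 1 ≤ N) (s : Fin nx → ℝ) (vstar : ℕ → Fin nu → ℝ)
    (hfeas : mpcFeasible A B Zset Vset Zf N vstar s) :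
    mpcFeasible A B Zset Vset Zf N
        (fun i => if i + 1 < N then vstar (i + 1)
          else K.mulVec (mpcTraj A B vstar s N))
        (A.mulVec s + B.mulVec (vstar 0)) ∧
    mpcCost A B Qf Q R N
        (fun i => if i + 1 < N then vstar (i + 1)
          else K.mulVec (mpcTraj A B vstar s N))
        (A.mulVec s + B.mulVec (vstar 0)) ≤
      mpcCost A B Qf Q R N vstar s -
        (s ⬝ᵥ Q.mulVec s) - (vstar 0 ⬝ᵥ R.mulVec (vstar 0)) ∧
    sInf {c : ℝ | ∃ v, mpcFeasible A B Zset Vset Zf N v (A.mulVec s + B.mulVec (vstar 0)) ∧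
        c = mpcCost A B Qf Q R N v (A.mulVec s + B.mulVec (vstar 0))} ≤
      mpcCost A B Qf Q R N vstar s -
        (s ⬝ᵥ Q.mulVec s) - (vstar 0 ⬝ᵥ R.mulVec (vstar 0)) := by
  obtain ⟨M, rfl⟩ : ∃ M, N = M + 1 := ⟨N - 1, by omega⟩
  set zN := mpcTraj A B vstar s (M + 1)
  have hw : ∀ j < M, (fun i => if i + 1 < M + 1 then vstar (i + 1) else K *ᵥ zN) j =
      vstar (j + 1) := fun j hj => if_pos (by omega)
  have hwM : (fun i => if i + 1 < M + 1 then vstar (i + 1) else K *ᵥ zN) M = K *ᵥ zN :=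
    if_neg (lt_irrefl _)
  have hcost := mpcCost_shift_le A B Qf Q R K hw hwM (hterm zN hfeas.2)
  have hfeas' := mpcFeasible_shift A B K hZfZ hinv hKV hfeas hw hwM
  exact ⟨hfeas', hcost,
    (sInf_mpcCost_le hQf.posSemidef hQ.posSemidef hR.posSemidef hfeas').trans hcost⟩

/-- **Recursive feasibility and cost decrease of the shifted sequence.**
Under the standard terminal ingredients (invariance of `Z_f` under `v = Kz`,
`K Z_f ⊆ V`, `Z_f ⊆ Z`, terminal cost decrease), if `v*` is an optimal feasible input
sequence at `s`, then the shifted sequence `v̄ = (v*_1, …, v*_{N-1}, K z*_N)` is feasible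
at `z_1* = A s + B v*_0` with
`J(z_1*, v̄) ≤ J*(s) - ‖s‖²_Q - ‖v*_0‖²_R`, and hence `J*(z_1*) ≤ J*(s) - ‖s‖²_Q - ‖v*_0‖²_R`. -/
theorem mpc_shifted_feasible_cost_decrease
    (A : Matrix (Fin nx) (Fin nx) ℝ) (B : Matrix (Fin nx) (Fin nu) ℝ)
    (K : Matrix (Fin nu) (Fin nx) ℝ)
    (Qf Q : Matrix (Fin nx) (Fin nx) ℝ) (R : Matrix (Fin nu) (Fin nu) ℝ)
    (hQf : Qf.PosDef) (hQ : Q.PosDef) (hR : R.PosDef)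
    (Zset Zf : Set (Fin nx → ℝ)) (Vset : Set (Fin nu → ℝ))
    (hZfZ : Zf ⊆ Zset)
    (hinv : ∀ z ∈ Zf, (A + B * K).mulVec z ∈ Zf)
    (hKV : ∀ z ∈ Zf, K.mulVec z ∈ Vset)
    (hterm : ∀ z ∈ Zf,
      (A + B * K).mulVec z ⬝ᵥ Qf.mulVec ((A + B * K).mulVec z) - z ⬝ᵥ Qf.mulVec z ≤
        -(z ⬝ᵥ Q.mulVec z) - K.mulVec z ⬝ᵥ R.mulVec (K.mulVec z))
    (N : ℕ) (hN : 1 ≤ N) (s : Fin nx → ℝ) (vstar : ℕ → Fin nu → ℝ)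
    (hfeas : mpcFeasible A B Zset Vset Zf N vstar s)
    (hopt : ∀ v, mpcFeasible A B Zset Vset Zf N v s →
      mpcCost A B Qf Q R N vstar s ≤ mpcCost A B Qf Q R N v s) :
    mpcFeasible A B Zset Vset Zf N
        (fun i => if i + 1 < N then vstar (i + 1)
          else K.mulVec (mpcTraj A B vstar s N))
        (A.mulVec s + B.mulVec (vstar 0)) ∧
    mpcCost A B Qf Q R N
        (fun i => if i + 1 < N then vstar (i + 1)
          else K.mulVec (mpcTraj A B vstar s N))
        (A.mulVec s + B.mulVec (vstar 0)) ≤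
      mpcCost A B Qf Q R N vstar s -
        (s ⬝ᵥ Q.mulVec s) - (vstar 0 ⬝ᵥ R.mulVec (vstar 0)) ∧
    sInf {c : ℝ | ∃ v, mpcFeasible A B Zset Vset Zf N v (A.mulVec s + B.mulVec (vstar 0)) ∧
        c = mpcCost A B Qf Q R N v (A.mulVec s + B.mulVec (vstar 0))} ≤
      mpcCost A B Qf Q R N vstar s -
        (s ⬝ᵥ Q.mulVec s) - (vstar 0 ⬝ᵥ R.mulVec (vstar 0)) :=
  mpc_shifted_feasible_cost_decrease_general A B K Qf Q R hQf hQ hR Zset Zf Vset hZfZ hinv hKV hterm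
    N hN s vstar hfeas
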